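/- arXiv:2204.11757 — 3 statements merged into one kernel-verified Lean document; each statement's English description precedes it below -/
import Mathlib

section
/- Let w_a, w_b be vectors in ℝⁿ equipped with the ℓ¹ norm, let d_a, d_b be positive real numbers, and let ε ≥ 0. If ‖(1/d_a)·w_a − (1/d_b)·w_b‖₁ ≤ ε, then ‖(1/d_a)·w_a − (1/(d_a+d_b))·(w_a + w_b)‖₁ ≤ ε/(d_a/d_b + 1), and in particular ‖(1/d_a)·w_a − (1/(d_a+d_b))·(w_a + w_b)‖₁ ≤ ε. -/
/-!
Merging `a` and `b` moves the normalized vector by a fixed fraction of their gap: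
`w_a/d_a - (w_a+w_b)/(d_a+d_b) = d_b/(d_a+d_b) • (w_a/d_a - w_b/d_b)`, and the factor
`d_b/(d_a+d_b) = 1/(d_a/d_b+1)` lies in `(0, 1)`.
-/

theorem inv_smul_sub_inv_add_smul_add {𝕜 E : Type*} [Field 𝕜] [AddCommGroup E] [Module 𝕜 E]
    {a b : 𝕜} (ha : a ≠ 0) (hb : b ≠ 0) (hab : a + b ≠ 0) (x y : E) :
    a⁻¹ • x - (a + b)⁻¹ • (x + y) = (a / b + 1)⁻¹ • (a⁻¹ • x - b⁻¹ • y) := by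
  match_scalars <;> field_simp; ring

theorem norm_inv_smul_sub_inv_add_smul_add {E : Type*} [SeminormedAddCommGroup E]
    [NormedSpace ℝ E] {a b : ℝ} (ha : 0 < a) (hb : 0 < b) (x y : E) :
    ‖a⁻¹ • x - (a + b)⁻¹ • (x + y)‖ = ‖a⁻¹ • x - b⁻¹ • y‖ / (a / b + 1) := by
  rw [inv_smul_sub_inv_add_smul_add ha.ne' hb.ne' (by positivity), norm_smul,
    norm_inv, Real.norm_of_nonneg (by positivity), inv_mul_eq_div]

theorem merged_node_close_general {n : ℕ}
    (wa wb : PiLp 1 (fun _ : Fin n => ℝ))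
    (da db : ℝ) (hda : 0 < da) (hdb : 0 < db)
    (ε : ℝ)
    (h : ‖(1 / da) • wa - (1 / db) • wb‖ ≤ ε) :
    ‖(1 / da) • wa - (1 / (da + db)) • (wa + wb)‖ ≤ ε / (da / db + 1) ∧
    ‖(1 / da) • wa - (1 / (da + db)) • (wa + wb)‖ ≤ ε := by
  simp only [one_div] at h ⊢
  have hε : 0 ≤ ε := (norm_nonneg _).trans h
  have hfactor : 1 ≤ da / db + 1 := le_add_of_nonneg_left (div_pos hda hdb).le
  have hclose := div_le_div_of_nonneg_right h (zero_le_one.trans hfactor)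
  rw [← norm_inv_smul_sub_inv_add_smul_add hda hdb] at hclose
  exact ⟨hclose, hclose.trans (div_le_self hε hfactor)⟩

/-- If the normalized adjacency vectors of two nodes are within `ε` in `ℓ¹`
norm, then the first node's normalized vector is within `ε/(d_a/d_b + 1)` (in particular,
within `ε`) of the merged super-node's normalized vector. -/
theorem merged_node_close {n : ℕ}
    (wa wb : PiLp 1 (fun _ : Fin n => ℝ))
    (da db : ℝ) (hda : 0 < da) (hdb : 0 < db)
    (ε : ℝ) (hε : 0 ≤ ε)
    (h : ‖(1 / da) • wa - (1 / db) • wb‖ ≤ ε) :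
    ‖(1 / da) • wa - (1 / (da + db)) • (wa + wb)‖ ≤ ε / (da / db + 1) ∧
    ‖(1 / da) • wa - (1 / (da + db)) • (wa + wb)‖ ≤ ε :=
  merged_node_close_general wa wb da db hda hdb ε h
end

section
/- Let w_a, w_b, w_c be vectors in ℝⁿ equipped with the ℓ¹ norm, let d_a, d_b, d_c be positive real numbers, and let ε ≥ 0. If ‖(1/d_c)·w_c − (1/d_a)·w_a‖₁ ≤ ε and ‖(1/d_a)·w_a − (1/d_b)·w_b‖₁ ≤ ε, then ‖(1/d_c)·w_c − (1/(d_a+d_b))·(w_a + w_b)‖₁ ≤ 2ε. -/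
/-!
The normalized vector of the super-node is the degree-weighted average of the normalized vectors
of `a` and `b`. Both of these lie in the closed `2ε`-ball around that of `c` (the second by the
triangle inequality through `a`), and the ball is convex.
-/

open Metric

theorem one_div_add_smul_add_eq {𝕜 E : Type*} [Field 𝕜] [AddCommGroup E] [Module 𝕜 E]
    {a b : 𝕜} (ha : a ≠ 0) (hb : b ≠ 0) (x y : E) :
    (1 / (a + b)) • (x + y) = (a / (a + b)) • ((1 / a) • x) + (b / (a + b)) • ((1 / b) • y) := by
  rw [smul_smul, smul_smul, smul_add]
  congr 2 <;> field_simp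

theorem close_to_supernode_general {n : ℕ}
    (wa wb wc : PiLp 1 (fun _ : Fin n => ℝ))
    (da db dc : ℝ) (hda : 0 < da) (hdb : 0 < db)
    (ε : ℝ)
    (hca : ‖(1 / dc) • wc - (1 / da) • wa‖ ≤ ε)
    (hab : ‖(1 / da) • wa - (1 / db) • wb‖ ≤ ε) :
    ‖(1 / dc) • wc - (1 / (da + db)) • (wa + wb)‖ ≤ 2 * ε := by
  set c := (1 / dc) • wc
  set a := (1 / da) • wa
  set b := (1 / db) • wb
  have hca' : dist c a ≤ ε := by rwa [dist_eq_norm]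
  have hab' : dist a b ≤ ε := by rwa [dist_eq_norm]
  have ha : a ∈ closedBall c (2 * ε) := by
    rw [mem_closedBall']
    linarith [dist_nonneg (x := c) (y := a)]
  have hb : b ∈ closedBall c (2 * ε) := by
    rw [mem_closedBall']
    linarith [dist_triangle c a b]
  have hsum : 0 < da + db := add_pos hda hdb
  have hmerge := convex_closedBall c (2 * ε) ha hb (div_pos hda hsum).le (div_pos hdb hsum).le
    (by field_simp)
  rwa [← one_div_add_smul_add_eq hda.ne' hdb.ne', mem_closedBall', dist_eq_norm] at hmerge

/-- If node `c` is `ε`-close to node `a` (in normalized `ℓ¹` adjacency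
distance) and nodes `a, b` are `ε`-close, then `c` is `2ε`-close to the super-node obtained
by merging `a` and `b`. -/
theorem close_to_supernode {n : ℕ}
    (wa wb wc : PiLp 1 (fun _ : Fin n => ℝ))
    (da db dc : ℝ) (hda : 0 < da) (hdb : 0 < db) (hdc : 0 < dc)
    (ε : ℝ) (hε : 0 ≤ ε)
    (hca : ‖(1 / dc) • wc - (1 / da) • wa‖ ≤ ε)
    (hab : ‖(1 / da) • wa - (1 / db) • wb‖ ≤ ε) :
    ‖(1 / dc) • wc - (1 / (da + db)) • (wa + wb)‖ ≤ 2 * ε :=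
  close_to_supernode_general wa wb wc da db dc hda hdb ε hca hab
end

section
/- Let n, n_c be positive integers with n_c ≤ n, π : Fin n → Fin n_c a surjective map with blocks B(x) = π⁻¹(π(x)), and let W : Fin n → Fin n → ℝ be a symmetric matrix with nonnegative entries and positive row sums. Define the coarsened weight matrix W_c : Fin n_c → Fin n_c → ℝ by W_c(a,b) = Σ_{x∈π⁻¹(a)} Σ_{y∈π⁻¹(b)} W(x,y), and the lifted weight matrix Ŵ : Fin n → Fin n → ℝ by Ŵ(x,y) = W_c(π(x),π(y)) / (|B(x)|·|B(y)|). Assume the row sums of W_c and of Ŵ are positive. Then every eigenvalue of the normalized Laplacian 𝓛(G_c) = I − D_c^{-1/2} W_c D_c^{-1/2} of the coarsened graph is also an eigenvalue of the normalized Laplacian 𝓛(Ĝ) = I − D̂^{-1/2} Ŵ D̂^{-1/2} of the lift, where D_c and D̂ are the diagonal matrices of row sums of W_c and Ŵ respectively. -/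
/-!
Write `c b = |π⁻¹ b|`. The lift has degrees `d̂ x = d_c (π x) / c (π x)`, so its normalized
adjacency matrix is `P 𝒜_c Pᵀ`, where `𝒜_c` is that of the coarsened graph and the columns of
`P x b = [π x = b] / √(c b)` are orthonormal. Hence `𝓛(Ĝ) P = P 𝓛(G_c)`, and `P` maps
eigenvectors of `𝓛(G_c)` to eigenvectors of `𝓛(Ĝ)` with the same eigenvalue.
-/

open Finset Matrix

theorem Matrix.one_sub_mul_mul_mul_eq_mul_one_sub {R m n : Type*} [Ring R] [Fintype m]
    [Fintype n] [DecidableEq m] [DecidableEq n] {P : Matrix n m R} {Q : Matrix m n R}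
    (hQP : Q * P = 1) (M : Matrix m m R) : (1 - P * M * Q) * P = P * (1 - M) := by
  rw [Matrix.sub_mul, Matrix.mul_assoc, hQP, Matrix.mul_one, Matrix.one_mul, Matrix.mul_sub,
    Matrix.mul_one]

theorem Matrix.exists_eigenvector_of_mul_eq_mul {R m n : Type*} [CommRing R] [Fintype m]
    [Fintype n] [DecidableEq m] {L : Matrix m m R} {L' : Matrix n n R} {P : Matrix n m R}
    {Q : Matrix m n R} (hQP : Q * P = 1) (hLP : L' * P = P * L) {μ : R} {v : m → R}
    (hv0 : v ≠ 0) (hv : L *ᵥ v = μ • v) : ∃ w, w ≠ 0 ∧ L' *ᵥ w = μ • w := by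
  refine ⟨P *ᵥ v, fun h => hv0 ?_, ?_⟩
  · simpa [mulVec_mulVec, hQP] using congrArg (Q *ᵥ ·) h
  · rw [mulVec_mulVec, hLP, ← mulVec_mulVec, hv, mulVec_smul]

namespace GraphCoarsening

noncomputable def normalizedAdjacency {ι : Type*} [Fintype ι] [DecidableEq ι]
    (A : Matrix ι ι ℝ) : Matrix ι ι ℝ :=
  diagonal (fun x => (√(∑ y, A x y))⁻¹) * A * diagonal (fun x => (√(∑ y, A x y))⁻¹)

theorem normalizedAdjacency_apply {ι : Type*} [Fintype ι] [DecidableEq ι] (A : Matrix ι ι ℝ)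
    (x y : ι) : normalizedAdjacency A x y = (√(∑ z, A x z))⁻¹ * A x y * (√(∑ z, A y z))⁻¹ := by
  simp [normalizedAdjacency]

variable {ι κ : Type*} [Fintype ι] [DecidableEq κ]

def fiberCard (π : ι → κ) (b : κ) : ℕ := #{x | π x = b}

theorem fiberCard_pos {π : ι → κ} (hπ : Function.Surjective π) (b : κ) : 0 < fiberCard π b :=
  card_pos.2 <| let ⟨x, hx⟩ := hπ b; ⟨x, by simp [hx]⟩

noncomputable def normalizedFiberIndicator (π : ι → κ) : Matrix ι κ ℝ :=
  of fun x b => if π x = b then (√(fiberCard π b))⁻¹ else 0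

theorem normalizedFiberIndicator_transpose_mul_self {π : ι → κ} (hπ : Function.Surjective π) :
    (normalizedFiberIndicator π)ᵀ * normalizedFiberIndicator π = 1 := by
  ext a b
  simp only [normalizedFiberIndicator, mul_apply, transpose_apply, of_apply, one_apply, ite_mul,
    zero_mul, mul_ite, mul_zero]
  split_ifs with hab
  · subst hab
    simp only [← ite_and, and_self, ← sum_filter, sum_const, nsmul_eq_mul]
    rw [← mul_inv, Real.mul_self_sqrt (Nat.cast_nonneg _)]
    exact mul_inv_cancel₀ (Nat.cast_ne_zero.2 (fiberCard_pos hπ a).ne')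
  · exact sum_eq_zero fun j _ => by grind

variable [Fintype κ]

theorem sum_comp_eq_sum_fiberCard_mul {R : Type*} [NonAssocSemiring R] (π : ι → κ) (f : κ → R) :
    ∑ x, f (π x) = ∑ b, (fiberCard π b : R) * f b := by
  rw [← Finset.sum_fiberwise' univ π f]
  simp [fiberCard]

theorem sum_comp_div_fiberCard {π : ι → κ} (hπ : Function.Surjective π) (f : κ → ℝ) :
    ∑ x, f (π x) / fiberCard π (π x) = ∑ b, f b := by
  rw [sum_comp_eq_sum_fiberCard_mul π fun b => f b / fiberCard π b]
  refine sum_congr rfl fun b _ => ?_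
  have := (fiberCard_pos hπ b).ne'
  field_simp

theorem normalizedFiberIndicator_mul_mul_transpose_apply (π : ι → κ) (M : Matrix κ κ ℝ)
    (x y : ι) :
    (normalizedFiberIndicator π * M * (normalizedFiberIndicator π)ᵀ) x y
      = (√(fiberCard π (π x)))⁻¹ * M (π x) (π y) * (√(fiberCard π (π y)))⁻¹ := by
  simp [normalizedFiberIndicator, mul_apply]

noncomputable def liftWeights (π : ι → κ) (A : Matrix κ κ ℝ) : Matrix ι ι ℝ :=
  of fun x y => A (π x) (π y) / (fiberCard π (π x) * fiberCard π (π y))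

theorem sum_liftWeights {π : ι → κ} (hπ : Function.Surjective π) (A : Matrix κ κ ℝ) (x : ι) :
    ∑ y, liftWeights π A x y = (∑ b, A (π x) b) / fiberCard π (π x) := by
  rw [sum_div, ← sum_comp_div_fiberCard hπ]
  refine sum_congr rfl fun y _ => ?_
  simp only [liftWeights, of_apply]
  ring

theorem normalizedAdjacency_liftWeights [DecidableEq ι] {π : ι → κ}
    (hπ : Function.Surjective π) (A : Matrix κ κ ℝ) :
    normalizedAdjacency (liftWeights π A)
      = normalizedFiberIndicator π * normalizedAdjacency A * (normalizedFiberIndicator π)ᵀ := by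
  ext x y
  rw [normalizedFiberIndicator_mul_mul_transpose_apply, normalizedAdjacency_apply,
    normalizedAdjacency_apply, sum_liftWeights hπ, sum_liftWeights hπ]
  simp only [liftWeights, of_apply]
  set cx : ℝ := (fiberCard π (π x) : ℝ)
  set cy : ℝ := (fiberCard π (π y) : ℝ)
  rw [Real.sqrt_div' _ (Nat.cast_nonneg _), Real.sqrt_div' _ (Nat.cast_nonneg _), inv_div, inv_div,
    ← Real.sqrt_div_self (x := cx), ← Real.sqrt_div_self (x := cy)]
  ring

end GraphCoarsening

theorem coarse_eigenvalues_are_lift_eigenvalues_general {n nc : ℕ}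
    (π : Fin n → Fin nc) (hπ : Function.Surjective π)
    (B : Fin n → Finset (Fin n))
    (hB : ∀ x, B x = Finset.univ.filter (fun x' => π x' = π x))
    -- the coarsened weight matrix
    (Wc : Matrix (Fin nc) (Fin nc) ℝ)
    -- the lifted weight matrix
    (What : Matrix (Fin n) (Fin n) ℝ)
    (hWhat : ∀ x y, What x y = Wc (π x) (π y) / ((B x).card * (B y).card))
    -- positive degrees of the coarsened graph and of the lift
    (dc : Fin nc → ℝ) (hdc : ∀ a, dc a = ∑ b, Wc a b)
    (dhat : Fin n → ℝ) (hdhat : ∀ x, dhat x = ∑ y, What x y)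
    -- the normalized Laplacians `𝓛 = I − D^{-1/2} A D^{-1/2}`
    (Lc : Matrix (Fin nc) (Fin nc) ℝ)
    (hLc : Lc = 1 - Matrix.diagonal (fun a => (Real.sqrt (dc a))⁻¹) * Wc *
      Matrix.diagonal (fun a => (Real.sqrt (dc a))⁻¹))
    (Lhat : Matrix (Fin n) (Fin n) ℝ)
    (hLhat : Lhat = 1 - Matrix.diagonal (fun x => (Real.sqrt (dhat x))⁻¹) * What *
      Matrix.diagonal (fun x => (Real.sqrt (dhat x))⁻¹)) :
    ∀ μ : ℝ, (∃ vc : Fin nc → ℝ, vc ≠ 0 ∧ Lc.mulVec vc = μ • vc) →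
      ∃ v : Fin n → ℝ, v ≠ 0 ∧ Lhat.mulVec v = μ • v := by
  rintro μ ⟨vc, hvc0, hvc⟩
  have hWhat_eq : What = GraphCoarsening.liftWeights π Wc := by
    ext x y
    rw [hWhat, hB, hB]
    rfl
  obtain rfl : dc = fun a => ∑ b, Wc a b := funext hdc
  obtain rfl : dhat = fun x => ∑ y, What x y := funext hdhat
  subst hWhat_eq hLc hLhat
  have hP := GraphCoarsening.normalizedFiberIndicator_transpose_mul_self hπ
  refine Matrix.exists_eigenvector_of_mul_eq_mul hP ?_ hvc0 hvc
  change (1 - GraphCoarsening.normalizedAdjacency (GraphCoarsening.liftWeights π Wc)) * _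
    = _ * (1 - GraphCoarsening.normalizedAdjacency Wc)
  rw [GraphCoarsening.normalizedAdjacency_liftWeights hπ]
  exact Matrix.one_sub_mul_mul_mul_eq_mul_one_sub hP _

/-- Jin–Loukas. Every eigenvalue of the normalized Laplacian of the
coarsened graph `G_c` (weights `W_c a b = ∑_{x∈π⁻¹ a} ∑_{y∈π⁻¹ b} W x y`) is also an
eigenvalue of the normalized Laplacian of the lift `Ĝ`
(weights `Ŵ x y = W_c (π x) (π y) / (|B x|·|B y|)`). -/
theorem coarse_eigenvalues_are_lift_eigenvalues {n nc : ℕ}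
    (hn : 0 < n) (hnc : 0 < nc) (hle : nc ≤ n)
    (π : Fin n → Fin nc) (hπ : Function.Surjective π)
    (B : Fin n → Finset (Fin n))
    (hB : ∀ x, B x = Finset.univ.filter (fun x' => π x' = π x))
    (W : Matrix (Fin n) (Fin n) ℝ) (hW : W.IsSymm) (hWnn : ∀ x y, 0 ≤ W x y)
    (hWpos : ∀ x, 0 < ∑ y, W x y)
    -- the coarsened weight matrix
    (Wc : Matrix (Fin nc) (Fin nc) ℝ)
    (hWc : ∀ a b, Wc a b = ∑ x ∈ Finset.univ.filter (fun x => π x = a),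
      ∑ y ∈ Finset.univ.filter (fun y => π y = b), W x y)
    -- the lifted weight matrix
    (What : Matrix (Fin n) (Fin n) ℝ)
    (hWhat : ∀ x y, What x y = Wc (π x) (π y) / ((B x).card * (B y).card))
    -- positive degrees of the coarsened graph and of the lift
    (dc : Fin nc → ℝ) (hdc : ∀ a, dc a = ∑ b, Wc a b) (hdcpos : ∀ a, 0 < dc a)
    (dhat : Fin n → ℝ) (hdhat : ∀ x, dhat x = ∑ y, What x y) (hdhatpos : ∀ x, 0 < dhat x)
    -- the normalized Laplacians `𝓛 = I − D^{-1/2} A D^{-1/2}`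
    (Lc : Matrix (Fin nc) (Fin nc) ℝ)
    (hLc : Lc = 1 - Matrix.diagonal (fun a => (Real.sqrt (dc a))⁻¹) * Wc *
      Matrix.diagonal (fun a => (Real.sqrt (dc a))⁻¹))
    (Lhat : Matrix (Fin n) (Fin n) ℝ)
    (hLhat : Lhat = 1 - Matrix.diagonal (fun x => (Real.sqrt (dhat x))⁻¹) * What *
      Matrix.diagonal (fun x => (Real.sqrt (dhat x))⁻¹)) :
    ∀ μ : ℝ, (∃ vc : Fin nc → ℝ, vc ≠ 0 ∧ Lc.mulVec vc = μ • vc) →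
      ∃ v : Fin n → ℝ, v ≠ 0 ∧ Lhat.mulVec v = μ • v :=
  coarse_eigenvalues_are_lift_eigenvalues_general π hπ B hB Wc What hWhat dc hdc dhat hdhat Lc hLc
    Lhat hLhat
end
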